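/- The expected value of the Anderson–Darling statistic A_n^2 under the null hypothesis is 1 for every sample size n. -/

import Mathlib

/-!
Indexing the sum by the sample points instead of the order statistics, a point `ω j` of rank
`r` (the number of sample points below it) carries the weight `(2r + 1)/n` on `log (ω j)` and
`(2n - 1 - 2r)/n` on `log (1 - ω j)`; ties, where this fails, have probability zero. Writing
`r = ∑ₖ 1[ω k < ω j]` and integrating out the independent coordinate `ω k` gives
`E[r g(ω j)] = (n - 1) ∫₀¹ x g(x) dx`. Together with `∫₀¹ log x = ∫₀¹ log (1 - x) = -1` and
`∫₀¹ x (log x - log (1 - x)) dx = 1/2`, every point contributes `-(n + 1)/n`, so the expectation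
is `-n + (n + 1) = 1`.
-/

open MeasureTheory ProbabilityTheory Set Real

namespace Tuple

open scoped Finset

variable {α : Type*} [LinearOrder α] {n : ℕ}

def rank (ω : Fin n → α) (j : Fin n) : ℕ := #{k | ω k < ω j}

theorem sort_symm_apply_eq_rank {ω : Fin n → α} (hω : Function.Injective ω) (j : Fin n) :
    ((sort ω).symm j : ℕ) = rank ω j := by
  set σ := sort ω
  have hmono : StrictMono (ω ∘ σ) :=
    (monotone_sort ω).strictMono_of_injective (hω.comp σ.injective)
  have hbelow :
      ({k | ω k < ω j} : Finset (Fin n)) = (Finset.Iio (σ.symm j)).map σ.toEmbedding := by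
    ext k
    simp only [Finset.mem_filter, Finset.mem_univ, true_and, Finset.mem_map_equiv, Finset.mem_Iio]
    conv_lhs => rw [← σ.apply_symm_apply k, ← σ.apply_symm_apply j]
    exact hmono.lt_iff_lt
  rw [rank, hbelow, Finset.card_map, Fin.card_Iio]

theorem rank_lt {ω : Fin n → α} (hω : Function.Injective ω) (j : Fin n) : rank ω j < n :=
  sort_symm_apply_eq_rank hω j ▸ ((sort ω).symm j).isLt

theorem sum_comp_sort {M : Type*} [AddCommMonoid M] {ω : Fin n → α}
    (hω : Function.Injective ω) (F : ℕ → α → M) :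
    ∑ i : Fin n, F i (ω (sort ω i)) = ∑ j, F (rank ω j) (ω j) := by
  rw [← (sort ω).symm.sum_comp]
  simp only [sort_symm_apply_eq_rank hω, Equiv.apply_symm_apply]

theorem sum_comp_sort_rev {M : Type*} [AddCommMonoid M] {ω : Fin n → α}
    (hω : Function.Injective ω) (F : ℕ → α → M) :
    ∑ i : Fin n, F i (ω (sort ω i.rev)) = ∑ j, F (n - 1 - rank ω j) (ω j) := by
  rw [← Equiv.sum_comp Fin.revPerm]
  simpa [Fin.val_rev, Nat.sub_sub, add_comm 1] using sum_comp_sort hω (fun i => F (n - 1 - i))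

theorem natCast_rank_mul (ω : Fin n → α) (j : Fin n) (c : ℝ) :
    (rank ω j : ℝ) * c = ∑ k, if ω k < ω j then c else 0 := by
  rw [rank, Finset.natCast_card_filter, Finset.sum_mul]
  simp only [ite_mul, one_mul, zero_mul]

end Tuple

open Tuple

section IIDSample

variable {ι α : Type*} [Fintype ι] [MeasurableSpace α] {μ : Measure α} [IsProbabilityMeasure μ]

theorem MeasureTheory.Measure.map_pi_pair {j k : ι} (hjk : j ≠ k) :
    (Measure.pi fun _ : ι => μ).map (fun ω => (ω j, ω k)) = μ.prod μ := by
  have hind := (iIndepFun_pi (μ := fun _ : ι => μ) (X := fun _ => id)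
    fun _ => aemeasurable_id).indepFun hjk
  rw [hind.map_prod_eq_prod_map_map (measurable_pi_apply j).aemeasurable
    (measurable_pi_apply k).aemeasurable]
  simp only [(measurePreserving_eval (fun _ : ι => μ) _).map_eq]

theorem MeasureTheory.Measure.ae_injective_pi [MeasurableEq α] [NullSingletonClass μ] :
    ∀ᵐ ω ∂(Measure.pi fun _ : ι => μ), Function.Injective ω := by
  have hpair (j k : ι) : ∀ᵐ ω ∂(Measure.pi fun _ : ι => μ), j ≠ k → ω j ≠ ω k := by
    rcases eq_or_ne j k with rfl | hjk
    · simp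
    have hdiag : μ.prod μ (diagonal α) = 0 := by
      rw [Measure.measure_prod_null measurableSet_diagonal]
      exact Filter.Eventually.of_forall fun x => by simp [diagonal]
    rw [← Measure.map_pi_pair hjk, Measure.map_apply
      ((measurable_pi_apply j).prodMk (measurable_pi_apply k)) measurableSet_diagonal] at hdiag
    exact (measure_eq_zero_iff_ae_notMem.1 hdiag).mono fun ω h _ => h
  filter_upwards [ae_all_iff.2 fun j => ae_all_iff.2 (hpair j)] with ω hω a b hab
  by_contra hne
  exact hω a b hne hab

end IIDSample

section RealSample

variable {ι : Type*} [Fintype ι] {μ : Measure ℝ} [IsProbabilityMeasure μ] {f : ℝ → ℝ}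

theorem integrable_pi_ite_lt (hf : Integrable f μ) (j k : ι) :
    Integrable (fun ω => if ω k < ω j then f (ω j) else 0) (Measure.pi fun _ : ι => μ) := by
  refine ((integrable_comp_eval (i := j) hf).indicator
    (measurableSet_lt (measurable_pi_apply k) (measurable_pi_apply j))).congr
    (.of_forall fun ω => ?_)
  simp [indicator_apply]

theorem integral_pi_ite_lt (hf : Integrable f μ) {j k : ι} (hjk : j ≠ k) :
    ∫ ω, (if ω k < ω j then f (ω j) else 0) ∂(Measure.pi fun _ : ι => μ)
      = ∫ x, μ.real (Iio x) * f x ∂μ := by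
  set g : ℝ × ℝ → ℝ := fun p => if p.2 < p.1 then f p.1 else 0
  have hg : Integrable g (μ.prod μ) := by
    refine ((hf.comp_fst μ).indicator (measurableSet_lt measurable_snd measurable_fst)).congr
      (.of_forall fun p => ?_)
    simp [g, indicator_apply]
  have hpair := (measurable_pi_apply (X := fun _ : ι => ℝ) j).prodMk (measurable_pi_apply k)
  calc ∫ ω, g (ω j, ω k) ∂(Measure.pi fun _ : ι => μ)
      = ∫ p, g p ∂(μ.prod μ) := by
        rw [← Measure.map_pi_pair hjk, integral_map hpair.aemeasurable
          (by rw [Measure.map_pi_pair hjk]; exact hg.aestronglyMeasurable)]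
    _ = ∫ x, μ.real (Iio x) * f x ∂μ := by
        rw [integral_prod g hg]
        congr 1 with x
        rw [← smul_eq_mul, ← integral_indicator_const _ measurableSet_Iio]
        simp [g, indicator_apply]

variable {n : ℕ}

theorem integrable_pi_rank_mul (hf : Integrable f μ) (j : Fin n) :
    Integrable (fun ω => (rank ω j : ℝ) * f (ω j)) (Measure.pi fun _ : Fin n => μ) := by
  simp_rw [natCast_rank_mul]
  exact integrable_finsetSum _ fun k _ => integrable_pi_ite_lt hf j k

theorem integral_pi_rank_mul (hf : Integrable f μ) (j : Fin n) :
    ∫ ω, (rank ω j : ℝ) * f (ω j) ∂(Measure.pi fun _ : Fin n => μ)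
      = (n - 1) * ∫ x, μ.real (Iio x) * f x ∂μ := by
  simp_rw [natCast_rank_mul]
  rw [integral_finsetSum _ fun k _ => integrable_pi_ite_lt hf j k,
    ← Finset.sum_erase _ (a := j) (by simp),
    Finset.sum_congr rfl fun k hk => integral_pi_ite_lt hf (Finset.ne_of_mem_erase hk).symm,
    Finset.sum_const, Finset.card_erase_of_mem (Finset.mem_univ j), Finset.card_univ,
    Fintype.card_fin, nsmul_eq_mul, Nat.cast_sub (Nat.one_le_of_lt j.isLt), Nat.cast_one]

end RealSample

section UnitInterval

open intervalIntegral

theorem intervalIntegrable_log_one_sub {a b : ℝ} :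
    IntervalIntegrable (fun x => log (1 - x)) volume a b := by
  simpa using (intervalIntegrable_log' (a := 1 - a) (b := 1 - b)).comp_sub_left 1

theorem integral_log_one_sub_zero_one : ∫ x in (0 : ℝ)..1, log (1 - x) = -1 := by
  simp [integral_comp_sub_left fun x => log x, integral_log]

theorem integral_mul_log_sub_log_one_sub :
    ∫ x in (0 : ℝ)..1, x * (log x - log (1 - x)) = 1 / 2 := by
  set F : ℝ → ℝ := fun x => (x * (x * log x) + (1 + x) * ((1 - x) * log (1 - x)) + x) / 2
  have hF : ContinuousOn F (Icc 0 1) := by fun_prop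
  have hF' (x : ℝ) (hx : x ∈ Ioo 0 1) : HasDerivAt F (x * (log x - log (1 - x))) x := by
    have h1x : 1 - x ≠ 0 := by linarith [hx.2]
    have := ((((hasDerivAt_id x).mul (hasDerivAt_mul_log hx.1.ne')).add
      (((hasDerivAt_id x).const_add 1).mul
        ((hasDerivAt_mul_log h1x).comp x ((hasDerivAt_id x).const_sub 1)))).add
      (hasDerivAt_id x)).div_const 2
    refine this.congr_deriv ?_
    simp only [id, Function.comp_apply]
    ring
  have hint : IntervalIntegrable (fun x => x * (log x - log (1 - x))) volume 0 1 :=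
    (intervalIntegrable_log'.sub intervalIntegrable_log_one_sub).continuousOn_mul (by fun_prop)
  rw [integral_eq_sub_of_hasDerivAt_of_le zero_le_one hF hF' hint]
  simp [F]

instance isProbabilityMeasure_restrict_Icc_zero_one :
    IsProbabilityMeasure (volume.restrict (Icc (0 : ℝ) 1)) :=
  ⟨by simp⟩

theorem integral_Icc_zero_one_eq_intervalIntegral (f : ℝ → ℝ) :
    ∫ x in Icc (0 : ℝ) 1, f x = ∫ x in (0 : ℝ)..1, f x := by
  rw [integral_Icc_eq_integral_Ioc, intervalIntegral.integral_of_le zero_le_one]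

theorem measureReal_restrict_Icc_zero_one_Iio {x : ℝ} (hx : x ∈ Icc 0 1) :
    (volume.restrict (Icc (0 : ℝ) 1)).real (Iio x) = x := by
  have hIco : Iio x ∩ Icc 0 1 = Ico 0 x := by
    ext y
    simp only [mem_inter_iff, mem_Iio, mem_Icc, mem_Ico]
    exact ⟨fun ⟨hyx, hy0, _⟩ => ⟨hy0, hyx⟩, fun ⟨hy0, hyx⟩ => ⟨hyx, hy0, hyx.le.trans hx.2⟩⟩
  rw [measureReal_restrict_apply measurableSet_Iio, hIco, Real.volume_real_Ico, sub_zero,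
    max_eq_left hx.1]

theorem integrable_log_Icc_zero_one : Integrable log (volume.restrict (Icc (0 : ℝ) 1)) :=
  (intervalIntegrable_iff_integrableOn_Icc_of_le zero_le_one).1
    intervalIntegral.intervalIntegrable_log'

theorem integrable_log_one_sub_Icc_zero_one :
    Integrable (fun x => log (1 - x)) (volume.restrict (Icc (0 : ℝ) 1)) :=
  (intervalIntegrable_iff_integrableOn_Icc_of_le zero_le_one).1 intervalIntegrable_log_one_sub

end UnitInterval

/-- The contribution of the sample point `ω j` to
`∑ i, (2i + 1) (log (ω (sort ω i)) + log (1 - ω (sort ω i.rev)))` when `ω` has no ties. -/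
noncomputable def andersonDarlingTerm {n : ℕ} (ω : Fin n → ℝ) (j : Fin n) : ℝ :=
  log (ω j) + (2 * n - 1) * log (1 - ω j) + 2 * (rank ω j * (log (ω j) - log (1 - ω j)))

theorem sum_order_statistics_eq_sum_andersonDarlingTerm {n : ℕ} {ω : Fin n → ℝ}
    (hω : Function.Injective ω) :
    ∑ i : Fin n, ((2 * (i : ℕ) + 1) / n) * (log (ω (sort ω i)) + log (1 - ω (sort ω i.rev)))
      = ∑ j, andersonDarlingTerm ω j / n := by
  simp_rw [mul_add, Finset.sum_add_distrib]
  rw [sum_comp_sort hω (fun i x => (2 * (i : ℝ) + 1) / n * log x),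
    sum_comp_sort_rev hω (fun i x => (2 * (i : ℝ) + 1) / n * log (1 - x)),
    ← Finset.sum_add_distrib]
  refine Finset.sum_congr rfl fun j _ => ?_
  have hr := rank_lt hω j
  rw [andersonDarlingTerm, Nat.cast_sub (by omega), Nat.cast_sub (by omega)]
  push_cast
  ring

section AndersonDarlingTerm

variable (n : ℕ) (j : Fin n)

local notation "P" => Measure.pi fun _ : Fin n => volume.restrict (Icc (0 : ℝ) 1)

theorem integrable_andersonDarlingTerm : Integrable (fun ω => andersonDarlingTerm ω j) P :=
  ((integrable_comp_eval (i := j) integrable_log_Icc_zero_one).add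
    ((integrable_comp_eval (i := j) (f := fun x => log (1 - x))
      integrable_log_one_sub_Icc_zero_one).const_mul _)).add
    ((integrable_pi_rank_mul
      (integrable_log_Icc_zero_one.sub integrable_log_one_sub_Icc_zero_one) j).const_mul 2)

theorem integral_andersonDarlingTerm : ∫ ω, andersonDarlingTerm ω j ∂P = -(n + 1) := by
  set μ : Measure ℝ := volume.restrict (Icc 0 1)
  have hlog :=
    integrable_comp_eval (μ := fun _ : Fin n => μ) (i := j) integrable_log_Icc_zero_one
  have hlog_one_sub := integrable_comp_eval (μ := fun _ : Fin n => μ) (i := j)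
    (f := fun x => log (1 - x)) integrable_log_one_sub_Icc_zero_one
  have hrank := integrable_pi_rank_mul (f := fun x => log x - log (1 - x))
    (integrable_log_Icc_zero_one.sub integrable_log_one_sub_Icc_zero_one) j
  have hE_log : ∫ x, log x ∂μ = -1 := by
    simp [μ, integral_Icc_zero_one_eq_intervalIntegral, integral_log]
  have hE_log_one_sub : ∫ x, log (1 - x) ∂μ = -1 := by
    rw [integral_Icc_zero_one_eq_intervalIntegral, integral_log_one_sub_zero_one]
  have hE_cdf : ∫ x, μ.real (Iio x) * (log x - log (1 - x)) ∂μ = 1 / 2 := by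
    rw [setIntegral_congr_fun measurableSet_Icc fun x hx => by
      rw [measureReal_restrict_Icc_zero_one_Iio hx], integral_Icc_zero_one_eq_intervalIntegral,
      integral_mul_log_sub_log_one_sub]
  unfold andersonDarlingTerm
  rw [integral_add ?_ (hrank.const_mul 2),
    integral_add hlog (hlog_one_sub.const_mul _), integral_const_mul, integral_const_mul,
    integral_comp_eval (μ := fun _ : Fin n => μ) (i := j)
      integrable_log_Icc_zero_one.aestronglyMeasurable,
    integral_comp_eval (μ := fun _ : Fin n => μ) (i := j) (f := fun x => log (1 - x))
      integrable_log_one_sub_Icc_zero_one.aestronglyMeasurable,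
    integral_pi_rank_mul (f := fun x => log x - log (1 - x))
      (integrable_log_Icc_zero_one.sub integrable_log_one_sub_Icc_zero_one),
    hE_log, hE_log_one_sub, hE_cdf]
  · ring
  · exact hlog.add (hlog_one_sub.const_mul _)

end AndersonDarlingTerm

/-- The expected value of the Anderson–Darling statistic
`Aₙ² = -n - ∑ᵢ ((2i-1)/n)[ln U₍ᵢ₎ + ln(1 - U₍ₙ₋ᵢ₊₁₎)]` under the null hypothesis
is `1`, for every sample size `n`. -/
theorem expected_anderson_darling (n : ℕ) (hn : 0 < n) :
    ∫ ω : Fin n → ℝ,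
        (-(n : ℝ) -
          ∑ i : Fin n, ((2 * (i : ℕ) + 1) / n) *
            (Real.log (ω (Tuple.sort ω i)) +
              Real.log (1 - ω (Tuple.sort ω i.rev))))
      ∂(Measure.pi fun _ : Fin n => volume.restrict (Set.Icc (0 : ℝ) 1))
      = 1 := by
  have hae := (Measure.ae_injective_pi (μ := volume.restrict (Icc (0 : ℝ) 1)) (ι := Fin n)).mono
    fun ω hω => congrArg (-(n : ℝ) - ·) (sum_order_statistics_eq_sum_andersonDarlingTerm hω)
  have hint (j : Fin n) (_ : j ∈ Finset.univ) :=
    (integrable_andersonDarlingTerm n j).div_const (n : ℝ)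
  rw [integral_congr_ae hae, integral_sub (integrable_const _) (integrable_finsetSum _ hint),
    integral_finsetSum _ hint]
  simp_rw [integral_div, integral_andersonDarlingTerm]
  simp only [integral_const, probReal_univ, one_smul, Finset.sum_const, Finset.card_univ,
    Fintype.card_fin, nsmul_eq_mul]
  field_simp
  ring
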